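/- Greedy factorization lemma: let $u \ge 2$ be a real number and let $m$ be a positive integer with $m \le u^2$ whose largest prime factor is at most $u$. Then there exist positive integers $v_1, v_2, v_3$ with $m = v_1 v_2 v_3$ and $\max(v_1, v_2, v_3) \le u$. -/

import Mathlib

/-!
Take `d` to be the largest divisor of `m` with `d ≤ u` and write `m = d k`. If `k = 1` we are
done. Otherwise pick a prime `p ∣ k`: smoothness gives `p ≤ u`, maximality of `d` gives
`d p > u`, and then `t = m / (d p)` satisfies `t ≤ u² / (d p) < u`.
-/

theorem Nat.exists_greatest_dvd {m : ℕ} (hm : m ≠ 0) {P : ℕ → Prop} (h : ∃ d, d ∣ m ∧ P d) :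
    ∃ d, d ∣ m ∧ P d ∧ ∀ e, e ∣ m → P e → e ≤ d := by
  classical
  obtain ⟨d₀, hd₀, hPd₀⟩ := h
  obtain ⟨d, hd, hmax⟩ := (m.divisors.filter P).exists_max_image id
    ⟨d₀, Finset.mem_filter.2 ⟨Nat.mem_divisors.2 ⟨hd₀, hm⟩, hPd₀⟩⟩
  simp only [Finset.mem_filter, Nat.mem_divisors, id] at hd hmax
  exact ⟨d, hd.1.1, hd.2, fun e he hPe => hmax e ⟨⟨he, hm⟩, hPe⟩⟩

theorem lt_mul_of_greatest_dvd_le {m d p : ℕ} {u : ℝ} (hd : 0 < d) (hp : p.Prime)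
    (hdp : d * p ∣ m) (hmax : ∀ e, e ∣ m → (e : ℝ) ≤ u → e ≤ d) : u < (d * p : ℕ) := by
  by_contra! h
  have : d * p ≤ d * 1 := by simpa using hmax _ hdp h
  exact hp.one_lt.not_ge (Nat.le_of_mul_le_mul_left this hd)

theorem le_of_mul_le_sq {α : Type*} [Semiring α] [LinearOrder α] [IsStrictOrderedRing α]
    {a t u : α} (hu : 0 ≤ u) (ha : u < a) (h : a * t ≤ u ^ 2) : t ≤ u := by
  by_contra! ht
  exact (mul_lt_mul'' ha ht hu hu).not_ge (by rwa [← sq])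

/-- Greedy factorization lemma: if `m ≤ u²` is a positive integer all of whose prime
factors are at most `u` (with `u ≥ 2` real), then `m = v₁v₂v₃` with each `vᵢ ≤ u`. -/
theorem greedy_factorization (u : ℝ) (hu : 2 ≤ u) (m : ℕ) (hm : 0 < m)
    (hmu : (m : ℝ) ≤ u ^ 2)
    (hsmooth : ∀ p : ℕ, p.Prime → p ∣ m → (p : ℝ) ≤ u) :
    ∃ v₁ v₂ v₃ : ℕ, 0 < v₁ ∧ 0 < v₂ ∧ 0 < v₃ ∧ m = v₁ * v₂ * v₃ ∧
      (v₁ : ℝ) ≤ u ∧ (v₂ : ℝ) ≤ u ∧ (v₃ : ℝ) ≤ u := by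
  have hu₁ : ((1 : ℕ) : ℝ) ≤ u := by rw [Nat.cast_one]; linarith
  obtain ⟨d, ⟨k, hdk⟩, hdu, hmax⟩ :=
    Nat.exists_greatest_dvd (P := fun d => (d : ℝ) ≤ u) hm.ne' ⟨1, one_dvd m, hu₁⟩
  have hd : 0 < d := Nat.pos_of_mul_pos_right (hdk ▸ hm)
  rcases eq_or_ne k 1 with rfl | hk
  · exact ⟨d, 1, 1, hd, one_pos, one_pos, by rw [hdk, mul_one, mul_one], hdu, hu₁, hu₁⟩
  set p := k.minFac
  have hp : p.Prime := Nat.minFac_prime hk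
  obtain ⟨t, hpt⟩ := k.minFac_dvd
  have hm_eq : m = d * p * t := by rw [hdk, hpt, mul_assoc]
  have hdp : u < (d * p : ℕ) := lt_mul_of_greatest_dvd_le hd hp ⟨t, hm_eq⟩ hmax
  have htu : (t : ℝ) ≤ u := le_of_mul_le_sq (by linarith) hdp (by exact_mod_cast hm_eq ▸ hmu)
  refine ⟨d, p, t, hd, hp.pos, Nat.pos_of_mul_pos_left (hm_eq ▸ hm), hm_eq, hdu, ?_, htu⟩
  exact hsmooth p hp (hm_eq ▸ (dvd_mul_left p d).mul_right t)
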